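/- Let K be a continuous solution of the integral equation K(x,y) + F(x,y) + ∫₀ˣ K(x,t)·F(t,y) dt = 0 on the triangle {(x,y) : 0 ≤ y ≤ x ≤ π}, and define ψ_n(x) := φ_n(x) + ∫₀ˣ K(x,t)·φ_n(t) dt. Then for all 0 ≤ t ≤ x ≤ π one has the kernel representation K(x,t) = −Σ_n c_n·ψ_n(x)·φ_n(t)ᵀ, and consequently for every l, ψ_l(x) = φ_l(x) − Σ_n c_n·ψ_n(x)·∫₀ˣ ⟨φ_n(t), φ_l(t)⟩ dt for all x ∈ [0,π]. -/

import Mathlib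

/-!
Insert the series of `F` into the integral equation. Since
`ψ n x = φ n x + ∫₀ˣ K(x,u) φ n u du`, the partial sums of `∑ c n ψ n x (φ n t)ᵀ` are the partial
sums of `F(x,t)` plus `∫₀ˣ K(x,u) · (partial sum of F(u,t)) du`. The series of `F` converges
uniformly on the square, so these tend, uniformly in `t ∈ [0,x]`, to
`F(x,t) + ∫₀ˣ K(x,u) F(u,t) du = -K(x,t)`. The uniformity lets us multiply by `φ l t` and integrate
over `[0,x]` term by term, which gives the second identity.
-/

open Matrix MeasureTheory Set Filter

open scoped Interval

attribute [local instance] Matrix.normedAddCommGroup Matrix.normedSpace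

section UniformConvergence

variable {ι α E F G : Type*} {l : Filter ι} {S : Set α}

theorem TendstoUniformlyOn.bilinear_of_bounded {𝕜 : Type*} [NontriviallyNormedField 𝕜]
    [SeminormedAddCommGroup E] [NormedSpace 𝕜 E] [SeminormedAddCommGroup F] [NormedSpace 𝕜 F]
    [SeminormedAddCommGroup G] [NormedSpace 𝕜 G] {f : ι → α → F} {f₀ : α → F}
    (h : TendstoUniformlyOn f f₀ l S) (L : E →L[𝕜] F →L[𝕜] G) {g : α → E} {C : ℝ}
    (hg : ∀ x ∈ S, ‖g x‖ ≤ C) :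
    TendstoUniformlyOn (fun i x => L (g x) (f i x)) (fun x => L (g x) (f₀ x)) l S := by
  rw [Metric.tendstoUniformlyOn_iff] at h ⊢
  intro ε hε
  filter_upwards [h (ε / (‖L‖ * max C 0 + 1)) (by positivity)] with i hi x hx
  calc dist (L (g x) (f₀ x)) (L (g x) (f i x)) = ‖L (g x) (f₀ x - f i x)‖ := by
        rw [dist_eq_norm, map_sub]
    _ ≤ ‖L‖ * ‖g x‖ * ‖f₀ x - f i x‖ := L.le_opNorm₂ _ _
    _ ≤ ‖L‖ * max C 0 * (ε / (‖L‖ * max C 0 + 1)) := by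
        gcongr
        · exact (hg x hx).trans (le_max_left _ _)
        · exact (dist_eq_norm (f₀ x) (f i x) ▸ hi x hx).le
    _ < ε := by
        rw [mul_div_assoc', div_lt_iff₀ (by positivity)]
        nlinarith [show 0 ≤ ‖L‖ * max C 0 by positivity]

theorem TendstoUniformlyOn.intervalIntegral_of_prod [NormedAddCommGroup E] [NormedSpace ℝ E]
    {a b : ℝ} {f : ι → ℝ → α → E} {f₀ : ℝ → α → E}
    (hf : ∀ i, ∀ x ∈ S, IntervalIntegrable (f i · x) volume a b)
    (hf₀ : ∀ x ∈ S, IntervalIntegrable (f₀ · x) volume a b)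
    (h : TendstoUniformlyOn (fun i p => f i p.1 p.2) (fun p => f₀ p.1 p.2) l ([[a, b]] ×ˢ S)) :
    TendstoUniformlyOn (fun i x => ∫ u in a..b, f i u x) (fun x => ∫ u in a..b, f₀ u x) l S := by
  rw [Metric.tendstoUniformlyOn_iff] at h ⊢
  intro ε hε
  filter_upwards [h (ε / (|b - a| + 1)) (by positivity)] with i hi x hx
  rw [dist_eq_norm, ← intervalIntegral.integral_sub (hf₀ x hx) (hf i x hx)]
  calc ‖∫ u in a..b, f₀ u x - f i u x‖ ≤ ε / (|b - a| + 1) * |b - a| :=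
        intervalIntegral.norm_integral_le_of_norm_le_const fun u hu =>
          (dist_eq_norm (f₀ u x) (f i u x) ▸ hi (u, x) ⟨uIoc_subset_uIcc hu, hx⟩).le
    _ < ε := by
        rw [div_mul_eq_mul_div, div_lt_iff₀ (by positivity)]
        nlinarith [abs_nonneg (b - a)]

end UniformConvergence

namespace Matrix

variable (m : Type*) [Fintype m]

noncomputable def vecMulVecCLM : (m → ℝ) →L[ℝ] (m → ℝ) →L[ℝ] Matrix m m ℝ :=
  (LinearMap.mk₂ ℝ vecMulVec add_vecMulVec smul_vecMulVec vecMulVec_add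
    vecMulVec_smul).toContinuousBilinearMap

variable [DecidableEq m]

noncomputable def mulCLM : Matrix m m ℝ →L[ℝ] Matrix m m ℝ →L[ℝ] Matrix m m ℝ :=
  (LinearMap.mul ℝ (Matrix m m ℝ)).toContinuousBilinearMap

noncomputable def mulVecCLM : Matrix m m ℝ →L[ℝ] (m → ℝ) →L[ℝ] m → ℝ :=
  (toLin' : Matrix m m ℝ ≃ₗ[ℝ] _).toLinearMap.toContinuousBilinearMap

end Matrix

section KernelSeries

variable {m : Type*} [Fintype m] [DecidableEq m] {φ ψ : ℕ → ℝ → m → ℝ} {c : ℕ → ℝ}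
  {k : ℝ → Matrix m m ℝ} {x : ℝ}

theorem sum_smul_vecMulVec_eq_add_integral (hk : ContinuousOn k [[0, x]])
    (hφ : ∀ n, Continuous (φ n)) (hψ : ∀ n, ψ n x = φ n x + ∫ u in 0..x, k u *ᵥ φ n u)
    (s : Finset ℕ) (t : ℝ) :
    ∑ n ∈ s, c n • vecMulVec (ψ n x) (φ n t) =
      ∑ n ∈ s, c n • vecMulVec (φ n x) (φ n t) +
        ∫ u in 0..x, k u * ∑ n ∈ s, c n • vecMulVec (φ n u) (φ n t) := by
  have hterm : ∀ n, ∫ u in 0..x, k u * (c n • vecMulVec (φ n u) (φ n t)) =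
      c n • vecMulVec (∫ u in 0..x, k u *ᵥ φ n u) (φ n t) := by
    intro n
    simp_rw [mul_smul_comm, mul_vecMulVec]
    rw [intervalIntegral.integral_smul]
    congr 1
    exact ((Matrix.vecMulVecCLM m).flip (φ n t)).intervalIntegral_comp_comm
      ((Matrix.mulVecCLM m).continuous₂.comp_continuousOn
        (hk.prodMk (hφ n).continuousOn)).intervalIntegrable
  simp_rw [Finset.mul_sum]
  rw [intervalIntegral.integral_finsetSum, ← Finset.sum_add_distrib]
  · refine Finset.sum_congr rfl fun n _ => ?_
    rw [hterm, hψ, add_vecMulVec, smul_add]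
  · intro n _
    exact (hk.mul (((hφ n).matrix_vecMulVec continuous_const).const_smul (c n)).continuousOn)
      |>.intervalIntegrable

theorem tendstoUniformlyOn_sum_smul_vecMulVec {F : ℝ → ℝ → Matrix m m ℝ} {b : ℝ}
    (hφ : ∀ n, Continuous (φ n))
    (hF : TendstoUniformlyOn
      (fun (s : Finset ℕ) (p : ℝ × ℝ) => ∑ n ∈ s, c n • vecMulVec (φ n p.1) (φ n p.2))
      (fun p => F p.1 p.2) atTop (Icc 0 b ×ˢ Icc 0 b))
    (hx0 : 0 ≤ x) (hxb : x ≤ b) (hk : ContinuousOn k (Icc 0 x))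
    (hkF : ∀ t ∈ Icc 0 x, k t + F x t + ∫ u in 0..x, k u * F u t = 0)
    (hψ : ∀ n, ψ n x = φ n x + ∫ u in 0..x, k u *ᵥ φ n u) :
    TendstoUniformlyOn (fun s t => ∑ n ∈ s, c n • vecMulVec (ψ n x) (φ n t)) (fun t => -k t)
      atTop (Icc 0 x) := by
  have hsq : Icc 0 x ×ˢ Icc 0 x ⊆ Icc 0 b ×ˢ Icc 0 b :=
    prod_mono (Icc_subset_Icc_right hxb) (Icc_subset_Icc_right hxb)
  have hpartial : ∀ s, Continuous fun p : ℝ × ℝ =>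
      ∑ n ∈ s, c n • vecMulVec (φ n p.1) (φ n p.2) := fun s =>
    continuous_finsetSum _ fun n _ =>
      (((hφ n).comp continuous_fst).matrix_vecMulVec ((hφ n).comp continuous_snd)).const_smul (c n)
  have hFcont : ContinuousOn (fun p : ℝ × ℝ => F p.1 p.2) (Icc 0 b ×ˢ Icc 0 b) :=
    hF.continuousOn (Frequently.of_forall fun s => (hpartial s).continuousOn)
  have hrow : TendstoUniformlyOn (fun s t => ∑ n ∈ s, c n • vecMulVec (φ n x) (φ n t))
      (fun t => F x t) atTop (Icc 0 x) :=
    (hF.comp fun t => (x, t)).mono fun t ht => hsq ⟨⟨hx0, le_rfl⟩, ht⟩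
  have hintegral : TendstoUniformlyOn
      (fun s t => ∫ u in 0..x, k u * ∑ n ∈ s, c n • vecMulVec (φ n u) (φ n t))
      (fun t => ∫ u in 0..x, k u * F u t) atTop (Icc 0 x) := by
    have hcolumn : ∀ t : ℝ, Continuous fun u : ℝ => (u, t) := fun _ => by fun_prop
    obtain ⟨C, hC⟩ := isCompact_Icc.exists_bound_of_continuousOn hk
    refine TendstoUniformlyOn.intervalIntegral_of_prod
      (fun s t _ => (hk.mul ((hpartial s).comp (hcolumn t)).continuousOn)
        |>.intervalIntegrable_of_Icc hx0)
      (fun t ht => (hk.mul (hFcont.comp (hcolumn t).continuousOn fun u hu => hsq ⟨hu, ht⟩))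
        |>.intervalIntegrable_of_Icc hx0) ?_
    rw [uIcc_of_le hx0]
    exact (hF.mono hsq).bilinear_of_bounded (Matrix.mulCLM m) (g := fun p => k p.1)
      fun p hp => hC p.1 hp.1
  rw [← uIcc_of_le hx0] at hk
  refine ((hrow.add hintegral).congr (Eventually.of_forall fun s t _ =>
    (sum_smul_vecMulVec_eq_add_integral hk hφ hψ s t).symm)).congr_right fun t ht => ?_
  rw [eq_neg_iff_add_eq_zero, add_comm]
  exact (add_assoc _ _ _).symm.trans (hkF t ht)

theorem hasSum_smul_integral_dotProduct (hx0 : 0 ≤ x) (hφ : ∀ n, Continuous (φ n))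
    (hU : TendstoUniformlyOn (fun s t => ∑ n ∈ s, c n • vecMulVec (ψ n x) (φ n t))
      (fun t => -k t) atTop (Icc 0 x))
    {l : ℕ} (hψ : ψ l x = φ l x + ∫ u in 0..x, k u *ᵥ φ l u) :
    HasSum (fun n => (c n * ∫ t in 0..x, φ n t ⬝ᵥ φ l t) • ψ n x) (φ l x - ψ l x) := by
  have hpartial : ∀ s : Finset ℕ,
      Continuous fun t => ∑ n ∈ s, c n • vecMulVec (ψ n x) (φ n t) := fun s =>
    continuous_finsetSum _ fun n _ =>
      (continuous_const.matrix_vecMulVec (hφ n)).const_smul (c n)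
  have hsum : ∀ s : Finset ℕ,
      ∫ t in 0..x, (∑ n ∈ s, c n • vecMulVec (ψ n x) (φ n t)) *ᵥ φ l t =
        ∑ n ∈ s, (c n * ∫ t in 0..x, φ n t ⬝ᵥ φ l t) • ψ n x := by
    intro s
    simp_rw [sum_mulVec, smul_mulVec, vecMulVec_mulVec, op_smul_eq_smul, smul_smul]
    rw [intervalIntegral.integral_finsetSum fun n _ =>
      ((((hφ n).dotProduct (hφ l)).const_mul (c n)).fun_smul continuous_const).intervalIntegrable
        _ _]
    refine Finset.sum_congr rfl fun n _ => ?_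
    rw [intervalIntegral.integral_smul_const, intervalIntegral.integral_const_mul]
  have hlimit : ∫ t in 0..x, (-k t) *ᵥ φ l t = φ l x - ψ l x := by
    simp_rw [neg_mulVec]
    rw [intervalIntegral.integral_neg, hψ]
    abel
  obtain ⟨C, hC⟩ := isCompact_Icc.exists_bound_of_continuousOn (hφ l).continuousOn
  rw [← uIcc_of_le hx0] at hU hC
  rw [HasSum, ← hlimit]
  have hlim := (hU.bilinear_of_bounded (Matrix.mulVecCLM m).flip hC)
    |>.tendsto_intervalIntegral_of_continuousOn (μ := volume)
      (Eventually.of_forall fun s => ((hpartial s).matrix_mulVec (hφ l)).continuousOn)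
  exact hlim.congr hsum

end KernelSeries

theorem kernel_representation
    (N : ℕ)
    -- `(φ n)` is an L²-orthogonal, complete system of eigenfunctions with eigenvalues `ev n`
    (φ : ℕ → ℝ → (Fin N → ℝ)) (c : ℕ → ℝ)
    (hφC : ∀ n, ContDiff ℝ 2 (φ n))
    -- `F(x,y) = ∑ n, c n • φ n x ⬝ (φ n y)ᵀ`, converging uniformly, with `F` of class C²
    (F : ℝ → ℝ → Matrix (Fin N) (Fin N) ℝ)
    (hFunif : TendstoUniformlyOn
      (fun (s : Finset ℕ) (p : ℝ × ℝ) => ∑ n ∈ s, c n • Matrix.vecMulVec (φ n p.1) (φ n p.2))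
      (fun p => F p.1 p.2) Filter.atTop (Set.Icc 0 Real.pi ×ˢ Set.Icc 0 Real.pi))
    -- `K` is a continuous solution of the integral equation on the triangle
    (K : ℝ → ℝ → Matrix (Fin N) (Fin N) ℝ)
    (hKcont : ContinuousOn (Function.uncurry K)
      {p : ℝ × ℝ | 0 ≤ p.2 ∧ p.2 ≤ p.1 ∧ p.1 ≤ Real.pi})
    (hKIE : ∀ x y : ℝ, 0 ≤ y → y ≤ x → x ≤ Real.pi →
      K x y + F x y + (∫ t in (0:ℝ)..x, K x t * F t y) = 0)
    (ψ : ℕ → ℝ → (Fin N → ℝ))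
    (hψ : ∀ n x, ψ n x = φ n x + ∫ t in (0:ℝ)..x, K x t *ᵥ φ n t) :
    (∀ x t : ℝ, 0 ≤ t → t ≤ x → x ≤ Real.pi →
      HasSum (fun n => c n • Matrix.vecMulVec (ψ n x) (φ n t)) (-K x t)) ∧
    (∀ l : ℕ, ∀ x ∈ Set.Icc (0:ℝ) Real.pi,
      HasSum (fun n => (c n * ∫ t in (0:ℝ)..x, φ n t ⬝ᵥ φ l t) • ψ n x)
        (φ l x - ψ l x)) := by
  have hφ : ∀ n, Continuous (φ n) := fun n => (hφC n).continuous
  have hU : ∀ x ∈ Icc 0 Real.pi, TendstoUniformlyOn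
      (fun s t => ∑ n ∈ s, c n • vecMulVec (ψ n x) (φ n t)) (fun t => -K x t) atTop (Icc 0 x) :=
    fun x hx => tendstoUniformlyOn_sum_smul_vecMulVec hφ hFunif hx.1 hx.2
      (hKcont.comp (continuous_const.prodMk continuous_id).continuousOn
        fun _ hu => ⟨hu.1, hu.2, hx.2⟩)
      (fun t ht => hKIE x t ht.1 ht.2 hx.2) (fun n => hψ n x)
  exact ⟨fun x t ht0 htx hxπ => (hU x ⟨ht0.trans htx, hxπ⟩).tendsto_at ⟨ht0, htx⟩,
    fun l x hx => hasSum_smul_integral_dotProduct hx.1 hφ (hU x hx) (hψ l x)⟩
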